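/- arXiv:1809.05422 — 7 statements merged into one kernel-verified Lean document; each statement's English description precedes it below -/
import Mathlib

section
/- Let A, Z be binary random variables and U, W random variables on a finite probability space with all relevant conditioning events having positive probability. Suppose (i) U is conditionally independent of Z given W, and (ii) there is a function δ of W alone such that E[A | U, W, Z=1] − E[A | U, W, Z=0] = δ(W) almost surely. Then E[A | W, Z=1] − E[A | W, Z=0] = δ(W) almost surely. -/
open Finset
open scoped Classical BigOperators

noncomputable section

variable {Ω : Type}

/-- Expectation of `f` under pmf `p` on a finite sample space. -/
def E [Fintype Ω] (p f : Ω → ℝ) : ℝ := ∑ ω, p ω * f ω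

/-- Probability of the event `s` under pmf `p`. -/
def Pr [Fintype Ω] (p : Ω → ℝ) (s : Ω → Prop) : ℝ := ∑ ω, if s ω then p ω else 0

/-- Conditional expectation of `f` given the event `s`. -/
def CE [Fintype Ω] (p f : Ω → ℝ) (s : Ω → Prop) : ℝ :=
  (∑ ω, if s ω then p ω * f ω else 0) / Pr p s

/-- The realized instrument propensity P(Z = Z(ω) | W = W(ω)). -/
def PZ {β : Type} [Fintype Ω] (p : Ω → ℝ) (W : Ω → β) (Z : Ω → ℝ) (ω : Ω) : ℝ :=
  Pr p (fun ω' => W ω' = W ω ∧ Z ω' = Z ω) / Pr p (fun ω' => W ω' = W ω)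

/-- The sign (−1)^{1−X(ω)} for a {0,1}-valued variable X. -/
def sgn (X : Ω → ℝ) (ω : Ω) : ℝ := if X ω = 1 then 1 else -1

/-!
Within the stratum `W = w, Z = z`, the law of total expectation over the values of `U` writes
`E[A | W = w, Z = z]` as the average of `E[A | U = u, W = w, Z = z]` with weights
`P(U = u | W = w, Z = z)`. Since `U ⫫ Z | W`, these weights are `P(U = u | W = w)` for both
values of `z`, so the difference of the two conditional means is the `P(U = · | W = w)`-average
of the fibrewise differences, each of which equals `δ w`.
-/

section

variable [Fintype Ω] {p : Ω → ℝ}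

lemma sum_image_ite_fiber {γ : Type} (U : Ω → γ) (c : Ω → Prop) (g : Ω → ℝ) :
    ∑ u ∈ univ.image U, ∑ ω, (if U ω = u ∧ c ω then g ω else 0)
      = ∑ ω, if c ω then g ω else 0 := by
  rw [sum_comm]
  refine sum_congr rfl fun ω _ => ?_
  by_cases hc : c ω
  · simp only [hc, and_true]
    rw [sum_ite_eq]
    simp
  · simp [hc]

lemma sum_Pr_fiber {γ : Type} (U : Ω → γ) (c : Ω → Prop) :
    ∑ u ∈ univ.image U, Pr p (fun ω => U ω = u ∧ c ω) = Pr p c := by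
  unfold Pr
  convert sum_image_ite_fiber U c p

lemma exists_pos_of_Pr_ne_zero (hp0 : ∀ ω, 0 ≤ p ω) {s : Ω → Prop} (h : Pr p s ≠ 0) :
    ∃ ω, s ω ∧ 0 < p ω := by
  obtain ⟨ω, -, hω⟩ := exists_ne_zero_of_sum_ne_zero h
  by_cases hs : s ω
  · rw [if_pos hs] at hω
    exact ⟨ω, hs, (hp0 ω).lt_of_ne' hω⟩
  · simp [hs] at hω

lemma Pr_mul_CE (hp0 : ∀ ω, 0 ≤ p ω) (f : Ω → ℝ) (s : Ω → Prop) :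
    Pr p s * CE p f s = ∑ ω, if s ω then p ω * f ω else 0 := by
  by_cases h : Pr p s = 0
  · rw [h, zero_mul]
    have hnull := (sum_eq_zero_iff_of_nonneg fun ω _ => ?_).mp h
    · refine (sum_eq_zero fun ω _ => ?_).symm
      have := hnull ω (mem_univ ω)
      split_ifs at this ⊢ <;> simp [*]
    · split_ifs
      exacts [hp0 ω, le_rfl]
  · exact mul_div_cancel₀ _ h

lemma CE_eq_sum_fiber (hp0 : ∀ ω, 0 ≤ p ω) {γ : Type} (U : Ω → γ) (f : Ω → ℝ)
    (c : Ω → Prop) :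
    CE p f c = ∑ u ∈ univ.image U,
      Pr p (fun ω => U ω = u ∧ c ω) / Pr p c * CE p f (fun ω => U ω = u ∧ c ω) := by
  simp_rw [div_mul_eq_mul_div, Pr_mul_CE hp0]
  rw [CE, ← sum_div]
  convert congrArg (· / Pr p c) (sum_image_ite_fiber U c (fun ω => p ω * f ω)).symm

lemma Pr_fiber_div_of_condIndep {β γ ε : Type} (U : Ω → γ) (Z : Ω → ε) (W : Ω → β)
    (u : γ) (z : ε) (w : β)
    (hUZ : Pr p (fun ω => U ω = u ∧ Z ω = z ∧ W ω = w) * Pr p (fun ω => W ω = w)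
      = Pr p (fun ω => U ω = u ∧ W ω = w) * Pr p (fun ω => Z ω = z ∧ W ω = w))
    (hw : Pr p (fun ω => W ω = w) ≠ 0) (hwz : Pr p (fun ω => W ω = w ∧ Z ω = z) ≠ 0) :
    Pr p (fun ω => U ω = u ∧ W ω = w ∧ Z ω = z) / Pr p (fun ω => W ω = w ∧ Z ω = z)
      = Pr p (fun ω => U ω = u ∧ W ω = w) / Pr p (fun ω => W ω = w) := by
  simp_rw [and_comm (a := W _ = w) (b := Z _ = z)] at hwz ⊢
  rw [div_eq_div_iff hwz hw, hUZ]

end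

theorem stmt0_general {β γ : Type} [Fintype Ω]
    (p : Ω → ℝ) (hp0 : ∀ ω, 0 ≤ p ω)
    (A Z : Ω → ℝ) (U : Ω → γ) (W : Ω → β)
    -- all relevant conditioning events have positive probability
    (hposW : ∀ ω, 0 < p ω → 0 < Pr p (fun ω' => W ω' = W ω))
    (hposWZ : ∀ ω, 0 < p ω → ∀ z : ℝ, z = 0 ∨ z = 1 →
      0 < Pr p (fun ω' => W ω' = W ω ∧ Z ω' = z))
    -- (i) U ⫫ Z | W
    (hUZ : ∀ (u : γ) (z : ℝ) (w : β),
      Pr p (fun ω => U ω = u ∧ Z ω = z ∧ W ω = w) * Pr p (fun ω => W ω = w)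
        = Pr p (fun ω => U ω = u ∧ W ω = w) * Pr p (fun ω => Z ω = z ∧ W ω = w))
    -- (ii) independent compliance type
    (δ : β → ℝ)
    (hδ : ∀ ω, 0 < p ω →
      CE p A (fun ω' => U ω' = U ω ∧ W ω' = W ω ∧ Z ω' = 1)
        - CE p A (fun ω' => U ω' = U ω ∧ W ω' = W ω ∧ Z ω' = 0) = δ (W ω)) :
    ∀ ω, 0 < p ω →
      CE p A (fun ω' => W ω' = W ω ∧ Z ω' = 1)
        - CE p A (fun ω' => W ω' = W ω ∧ Z ω' = 0) = δ (W ω) := by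
  intro ω₀ hω₀
  have hw := (hposW ω₀ hω₀).ne'
  set π : γ → ℝ := fun u =>
    Pr p (fun ω => U ω = u ∧ W ω = W ω₀) / Pr p (fun ω => W ω = W ω₀) with hπ
  have hCE : ∀ z : ℝ, z = 0 ∨ z = 1 → CE p A (fun ω => W ω = W ω₀ ∧ Z ω = z)
      = ∑ u ∈ univ.image U, π u * CE p A (fun ω => U ω = u ∧ W ω = W ω₀ ∧ Z ω = z) := by
    intro z hz
    rw [CE_eq_sum_fiber hp0 U]
    refine sum_congr rfl fun u _ => ?_
    rw [Pr_fiber_div_of_condIndep U Z W u z _ (hUZ u z _) hw (hposWZ ω₀ hω₀ z hz).ne']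
  have hfiber : ∀ u ∈ univ.image U,
      π u * (CE p A (fun ω => U ω = u ∧ W ω = W ω₀ ∧ Z ω = 1)
        - CE p A (fun ω => U ω = u ∧ W ω = W ω₀ ∧ Z ω = 0)) = π u * δ (W ω₀) := by
    intro u _
    -- `hδ` says nothing about a null fibre, but its weight vanishes
    by_cases hu : Pr p (fun ω => U ω = u ∧ W ω = W ω₀) = 0
    · simp [hπ, hu]
    obtain ⟨ω₁, ⟨rfl, hW₁⟩, hω₁⟩ := exists_pos_of_Pr_ne_zero hp0 hu
    rw [← hW₁, hδ ω₁ hω₁]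
  rw [hCE 1 (Or.inr rfl), hCE 0 (Or.inl rfl), ← sum_sub_distrib]
  simp_rw [← mul_sub]
  rw [sum_congr rfl hfiber, ← sum_mul, hπ, ← sum_div, sum_Pr_fiber, div_self hw, one_mul]

/-- Point-exposure case of Lemma 1: under IV independence (U ⫫ Z | W) and independent
compliance type, δ(W) is identified from (A, Z, W). -/
theorem stmt0 {β γ : Type} [Fintype Ω]
    (p : Ω → ℝ) (hp0 : ∀ ω, 0 ≤ p ω) (hp1 : ∑ ω, p ω = 1)
    (A Z : Ω → ℝ) (U : Ω → γ) (W : Ω → β)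
    (hA : ∀ ω, A ω = 0 ∨ A ω = 1) (hZ : ∀ ω, Z ω = 0 ∨ Z ω = 1)
    -- all relevant conditioning events have positive probability
    (hposW : ∀ ω, 0 < p ω → 0 < Pr p (fun ω' => W ω' = W ω))
    (hposWZ : ∀ ω, 0 < p ω → ∀ z : ℝ, z = 0 ∨ z = 1 →
      0 < Pr p (fun ω' => W ω' = W ω ∧ Z ω' = z))
    (hposUWZ : ∀ ω, 0 < p ω → ∀ z : ℝ, z = 0 ∨ z = 1 →
      0 < Pr p (fun ω' => U ω' = U ω ∧ W ω' = W ω ∧ Z ω' = z))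
    -- (i) U ⫫ Z | W
    (hUZ : ∀ (u : γ) (z : ℝ) (w : β),
      Pr p (fun ω => U ω = u ∧ Z ω = z ∧ W ω = w) * Pr p (fun ω => W ω = w)
        = Pr p (fun ω => U ω = u ∧ W ω = w) * Pr p (fun ω => Z ω = z ∧ W ω = w))
    -- (ii) independent compliance type
    (δ : β → ℝ)
    (hδ : ∀ ω, 0 < p ω →
      CE p A (fun ω' => U ω' = U ω ∧ W ω' = W ω ∧ Z ω' = 1)
        - CE p A (fun ω' => U ω' = U ω ∧ W ω' = W ω ∧ Z ω' = 0) = δ (W ω)) :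
    ∀ ω, 0 < p ω →
      CE p A (fun ω' => W ω' = W ω ∧ Z ω' = 1)
        - CE p A (fun ω' => W ω' = W ω ∧ Z ω' = 0) = δ (W ω) :=
  stmt0_general p hp0 A Z U W hposW hposWZ hUZ δ hδ
end
end

section
/- Let A, Z be {0,1}-valued random variables and W a random variable on a finite probability space, with 0 < P(Z=1 | W) < 1 almost surely. Define δ(W) = E[A | W, Z=1] − E[A | W, Z=0], and assume δ(W) ≠ 0 almost surely. Then E[ (−1)^{1−Z} · A / ( P(Z | W) · δ(W) ) | W ] = 1 almost surely, where P(Z|W) denotes P(Z=z|W) evaluated at the realized value z of Z. -/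
/-! On the cell `{W = w, Z = z}` the realized propensity is the constant
`P(W = w, Z = z) / P(W = w)`, so the weighted sum over `{W = w}` splits into the `Z = 1` and
`Z = 0` cells, each a constant multiple of `E[A | W = w, Z = z]`. With the signs this gives
`P(W = w) / δ(w) · (E[A | w, 1] - E[A | w, 0]) = P(W = w)`, and dividing by `P(W = w)` gives 1. -/

open Finset
open scoped Classical BigOperators

noncomputable section

variable {Ω : Type}

section

variable [Fintype Ω] (p : Ω → ℝ)

theorem CE_mul_Pr (f : Ω → ℝ) {s : Ω → Prop} [DecidablePred s] (hs : Pr p s ≠ 0) :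
    CE p f s * Pr p s = ∑ ω, if s ω then p ω * f ω else 0 := by
  rw [CE, div_mul_cancel₀ _ hs]
  congr!

theorem CE_const_mul (c : ℝ) (f : Ω → ℝ) (s : Ω → Prop) :
    CE p (fun ω => c * f ω) s = c * CE p f s := by
  simp only [CE, mul_left_comm (p _) c, ← mul_ite_zero, ← Finset.mul_sum, mul_div_assoc]

theorem sum_ite_eq_add_of_binary (g : Ω → ℝ) (s : Ω → Prop) {Z : Ω → ℝ}
    (hZ : ∀ ω, Z ω = 0 ∨ Z ω = 1) :
    (∑ ω, if s ω then g ω else 0) =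
      (∑ ω, if s ω ∧ Z ω = 1 then g ω else 0) + ∑ ω, if s ω ∧ Z ω = 0 then g ω else 0 := by
  rw [← Finset.sum_add_distrib]
  refine Finset.sum_congr rfl fun ω _ => ?_
  rcases hZ ω with h | h <;> simp [h]

theorem sum_ite_congr_on {s : Ω → Prop} [DecidablePred s] {g h : Ω → ℝ}
    (hgh : ∀ ω, s ω → g ω = h ω) :
    (∑ ω, if s ω then g ω else 0) = ∑ ω, if s ω then h ω else 0 :=
  Finset.sum_congr rfl fun ω _ => by split_ifs with hs <;> simp [hgh ω, hs]

variable {β : Type} (W : Ω → β) (Z : Ω → ℝ)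

theorem PZ_of_eq {w : β} {z : ℝ} {ω : Ω} (hW : W ω = w) (hZ : Z ω = z) :
    PZ p W Z ω = Pr p (fun ω' => W ω' = w ∧ Z ω' = z) / Pr p (fun ω' => W ω' = w) := by
  simp only [PZ, hW, hZ]

theorem sum_ite_signed_ipw_weight (A : Ω → ℝ) (δ : β → ℝ) (w : β)
    (hZ : ∀ ω, Z ω = 0 ∨ Z ω = 1)
    (hP1 : Pr p (fun ω => W ω = w ∧ Z ω = 1) ≠ 0) (hP0 : Pr p (fun ω => W ω = w ∧ Z ω = 0) ≠ 0) :
    (∑ ω, if W ω = w then p ω * (sgn Z ω * A ω / (PZ p W Z ω * δ (W ω))) else 0) =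
      Pr p (fun ω => W ω = w) / δ w *
        (CE p A (fun ω => W ω = w ∧ Z ω = 1) - CE p A (fun ω => W ω = w ∧ Z ω = 0)) := by
  have weight_eq (z : ℝ) (hz : z = 0 ∨ z = 1) (ω : Ω) (hω : W ω = w ∧ Z ω = z) :
      p ω * (sgn Z ω * A ω / (PZ p W Z ω * δ (W ω))) = p ω * ((if z = 1 then 1 else -1) *
        (Pr p (fun ω => W ω = w) / (Pr p (fun ω => W ω = w ∧ Z ω = z) * δ w)) * A ω) := by
    rw [PZ_of_eq p W Z hω.1 hω.2, hω.1]
    rcases hz with rfl | rfl <;> simp only [sgn, hω.2] <;> field_simp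
  rw [sum_ite_eq_add_of_binary _ _ hZ, sum_ite_congr_on (weight_eq 1 (Or.inr rfl)),
    sum_ite_congr_on (weight_eq 0 (Or.inl rfl)), ← CE_mul_Pr p _ hP1, ← CE_mul_Pr p _ hP0,
    CE_const_mul, CE_const_mul, if_pos rfl, if_neg zero_ne_one]
  field_simp
  ring

end

theorem stmt1_general {β : Type} [Fintype Ω]
    (p : Ω → ℝ)
    (A Z : Ω → ℝ) (W : Ω → β)
    (hZ : ∀ ω, Z ω = 0 ∨ Z ω = 1)
    -- 0 < P(Z=1 | W) < 1 a.s.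
    (hposW : ∀ ω, 0 < p ω → 0 < Pr p (fun ω' => W ω' = W ω))
    (hposWZ : ∀ ω, 0 < p ω → ∀ z : ℝ, z = 0 ∨ z = 1 →
      0 < Pr p (fun ω' => W ω' = W ω ∧ Z ω' = z))
    (δ : β → ℝ)
    (hδdef : ∀ ω, 0 < p ω →
      δ (W ω) = CE p A (fun ω' => W ω' = W ω ∧ Z ω' = 1)
        - CE p A (fun ω' => W ω' = W ω ∧ Z ω' = 0))
    (hδne : ∀ ω, 0 < p ω → δ (W ω) ≠ 0) :
    ∀ ω, 0 < p ω →
      CE p (fun ω' => sgn Z ω' * A ω' / (PZ p W Z ω' * δ (W ω')))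
        (fun ω' => W ω' = W ω) = 1 := by
  intro ω hpω
  have hP1 := (hposWZ ω hpω 1 (Or.inr rfl)).ne'
  have hP0 := (hposWZ ω hpω 0 (Or.inl rfl)).ne'
  rw [CE, sum_ite_signed_ipw_weight p W Z A δ (W ω) hZ hP1 hP0, ← hδdef ω hpω,
    div_mul_cancel₀ _ (hδne ω hpω), div_self (hposW ω hpω).ne']

/-- Unbiasedness of the signed inverse-probability-of-instrument weights:
E[(−1)^{1−Z} A / (P(Z|W) δ(W)) | W] = 1 a.s. -/
theorem stmt1 {β : Type} [Fintype Ω]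
    (p : Ω → ℝ) (hp0 : ∀ ω, 0 ≤ p ω) (hp1 : ∑ ω, p ω = 1)
    (A Z : Ω → ℝ) (W : Ω → β)
    (hA : ∀ ω, A ω = 0 ∨ A ω = 1) (hZ : ∀ ω, Z ω = 0 ∨ Z ω = 1)
    -- 0 < P(Z=1 | W) < 1 a.s.
    (hposW : ∀ ω, 0 < p ω → 0 < Pr p (fun ω' => W ω' = W ω))
    (hposWZ : ∀ ω, 0 < p ω → ∀ z : ℝ, z = 0 ∨ z = 1 →
      0 < Pr p (fun ω' => W ω' = W ω ∧ Z ω' = z))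
    (δ : β → ℝ)
    (hδdef : ∀ ω, 0 < p ω →
      δ (W ω) = CE p A (fun ω' => W ω' = W ω ∧ Z ω' = 1)
        - CE p A (fun ω' => W ω' = W ω ∧ Z ω' = 0))
    (hδne : ∀ ω, 0 < p ω → δ (W ω) ≠ 0) :
    ∀ ω, 0 < p ω →
      CE p (fun ω' => sgn Z ω' * A ω' / (PZ p W Z ω' * δ (W ω')))
        (fun ω' => W ω' = W ω) = 1 :=
  stmt1_general p A Z W hZ hposW hposWZ δ hδdef hδne
end
end

section
/- Let A, Z ∈ {0,1} and W be random variables on a finite probability space with 0 < P(Z=1|W) < 1 a.s. Define δ(W) = E[A|W,Z=1] − E[A|W,Z=0]. Then for each fixed a ∈ {0,1}: E[ (−1)^{1−Z} 1{A=a} / P(Z|W) | W ] = (−1)^{1−a} δ(W) almost surely. -/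
open Finset
open scoped Classical BigOperators

noncomputable section

variable {Ω : Type}

lemma CE_core {β : Type} [Fintype Ω]
    (p : Ω → ℝ) (Z : Ω → ℝ) (W : Ω → β)
    (hZ : ∀ ω, Z ω = 0 ∨ Z ω = 1) (ω0 : Ω)
    (hPW : 0 < Pr p (fun ω' => W ω' = W ω0))
    (hP1 : 0 < Pr p (fun ω' => W ω' = W ω0 ∧ Z ω' = 1))
    (hP0 : 0 < Pr p (fun ω' => W ω' = W ω0 ∧ Z ω' = 0))
    (f : Ω → ℝ) :
    CE p (fun ω' => sgn Z ω' * f ω' / PZ p W Z ω') (fun ω' => W ω' = W ω0)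
      = CE p f (fun ω' => W ω' = W ω0 ∧ Z ω' = 1)
        - CE p f (fun ω' => W ω' = W ω0 ∧ Z ω' = 0) := by
  set PW := Pr p (fun ω' => W ω' = W ω0) with hPWdef
  set P1 := Pr p (fun ω' => W ω' = W ω0 ∧ Z ω' = 1) with hP1def
  set P0 := Pr p (fun ω' => W ω' = W ω0 ∧ Z ω' = 0) with hP0def
  have hnum : (∑ ω', if W ω' = W ω0 then p ω' * (sgn Z ω' * f ω' / PZ p W Z ω') else 0)
      = (PW / P1) * (∑ ω', if W ω' = W ω0 ∧ Z ω' = 1 then p ω' * f ω' else 0)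
        - (PW / P0) * (∑ ω', if W ω' = W ω0 ∧ Z ω' = 0 then p ω' * f ω' else 0) := by
    rw [Finset.mul_sum, Finset.mul_sum, ← Finset.sum_sub_distrib]
    apply Finset.sum_congr rfl
    intro ω' _
    by_cases hw : W ω' = W ω0
    · rcases hZ ω' with hz | hz
      · have hPZ : PZ p W Z ω' = P0 / PW := by
          rw [hP0def, hPWdef]; unfold PZ; rw [hw, hz]
        rw [if_pos hw, if_neg (by simp [hz]), if_pos ⟨hw, hz⟩, hPZ]
        have hs : sgn Z ω' = -1 := by simp [sgn, hz]
        rw [hs]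
        field_simp
        all_goals first | exact Or.inl trivial | ring1 | (left; ring1)
      · have hPZ : PZ p W Z ω' = P1 / PW := by
          rw [hP1def, hPWdef]; unfold PZ; rw [hw, hz]
        rw [if_pos hw, if_pos ⟨hw, hz⟩, if_neg (by simp [hz]), hPZ]
        have hs : sgn Z ω' = 1 := by simp [sgn, hz]
        rw [hs]
        field_simp
        all_goals first | exact Or.inl trivial | ring1 | (left; ring1)
    · rw [if_neg hw, if_neg (by tauto), if_neg (by tauto)]
      ring
  unfold CE
  rw [hnum, ← hPWdef, ← hP1def, ← hP0def]
  field_simp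

lemma CE_one_sub [Fintype Ω] (p A : Ω → ℝ) (s : Ω → Prop) (hs : 0 < Pr p s) :
    CE p (fun ω => 1 - A ω) s = 1 - CE p A s := by
  have h : (∑ ω, if s ω then p ω * (1 - A ω) else 0)
      = Pr p s - ∑ ω, if s ω then p ω * A ω else 0 := by
    unfold Pr
    rw [← Finset.sum_sub_distrib]
    apply Finset.sum_congr rfl
    intro ω _
    by_cases hsω : s ω <;> simp [hsω] <;> ring
  unfold CE
  rw [h]
  field_simp

/-- Signed instrument-weighted treatment indicators:
E[(−1)^{1−Z}(1−A)/P(Z|W) | W] = −δ(W) and, for each fixed a ∈ {0,1},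
E[(−1)^{1−Z} 1{A=a}/P(Z|W) | W] = (−1)^{1−a} δ(W) a.s. -/
theorem stmt2 {β : Type} [Fintype Ω]
    (p : Ω → ℝ) (hp0 : ∀ ω, 0 ≤ p ω) (hp1 : ∑ ω, p ω = 1)
    (A Z : Ω → ℝ) (W : Ω → β)
    (hA : ∀ ω, A ω = 0 ∨ A ω = 1) (hZ : ∀ ω, Z ω = 0 ∨ Z ω = 1)
    (hposW : ∀ ω, 0 < p ω → 0 < Pr p (fun ω' => W ω' = W ω))
    (hposWZ : ∀ ω, 0 < p ω → ∀ z : ℝ, z = 0 ∨ z = 1 →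
      0 < Pr p (fun ω' => W ω' = W ω ∧ Z ω' = z))
    (δ : β → ℝ)
    (hδdef : ∀ ω, 0 < p ω →
      δ (W ω) = CE p A (fun ω' => W ω' = W ω ∧ Z ω' = 1)
        - CE p A (fun ω' => W ω' = W ω ∧ Z ω' = 0)) :
    ∀ ω, 0 < p ω →
      (CE p (fun ω' => sgn Z ω' * (1 - A ω') / PZ p W Z ω')
          (fun ω' => W ω' = W ω) = -δ (W ω))
      ∧ ∀ a : ℝ, a = 0 ∨ a = 1 →
          CE p (fun ω' => sgn Z ω' * (if A ω' = a then 1 else 0) / PZ p W Z ω')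
            (fun ω' => W ω' = W ω)
            = (if a = 1 then (1 : ℝ) else -1) * δ (W ω) := by
  intro ω hω
  have hPW := hposW ω hω
  have hP1 := hposWZ ω hω 1 (Or.inr rfl)
  have hP0 := hposWZ ω hω 0 (Or.inl rfl)
  have hδ := hδdef ω hω
  have hmain : CE p (fun ω' => sgn Z ω' * (1 - A ω') / PZ p W Z ω')
      (fun ω' => W ω' = W ω) = -δ (W ω) := by
    have := CE_core p Z W hZ ω hPW hP1 hP0 (fun ω' => 1 - A ω')
    rw [this, CE_one_sub p A _ hP1, CE_one_sub p A _ hP0, hδ]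
    ring
  refine ⟨hmain, ?_⟩
  intro a ha
  rcases ha with ha | ha
  · subst ha
    have hfun : (fun ω' => sgn Z ω' * (if A ω' = (0:ℝ) then (1:ℝ) else 0) / PZ p W Z ω')
        = (fun ω' => sgn Z ω' * (1 - A ω') / PZ p W Z ω') := by
      funext ω'
      rcases hA ω' with h | h <;> simp [h]
    rw [hfun, hmain, if_neg (by norm_num)]
    ring
  · subst ha
    have hfun : (fun ω' => sgn Z ω' * (if A ω' = (1:ℝ) then (1:ℝ) else 0) / PZ p W Z ω')
        = (fun ω' => sgn Z ω' * A ω' / PZ p W Z ω') := by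
      funext ω'
      rcases hA ω' with h | h <;> simp [h]
    rw [hfun, if_pos rfl, CE_core p Z W hZ ω hPW hP1 hP0 A, hδ]
    ring
end
end

section
/- Let A, Z ∈ {0,1}, W a random variable on a finite probability space with 0 < P(Z=1|W) < 1 a.s., δ(W) = E[A|W,Z=1] − E[A|W,Z=0] ≠ 0 a.s., and let f*(a|W) ∈ (0,1) be any user-specified function with f*(1|W) + f*(0|W) = 1. Define the composite weight 1/𝒲† = (−1)^{1−Z}(−1)^{1−A} f*(A|W) / ( P(Z|W) δ(W) ). Then, if there are no conditioning variables beyond W, for any bounded function g, E[ g(A,W)·(−1)^{1−Z}(−1)^{1−A} f*(A|W) / (P(Z|W) δ(W)) | W ] = Σ_{a∈{0,1}} g(a, W) f*(a|W) almost surely. -/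
open Finset
open scoped Classical BigOperators

noncomputable section

variable {Ω : Type}

/-- The composite IV weight reweights the observed treatment distribution to the
user-specified reference distribution f*(·|W). -/
theorem stmt10 {β : Type} [Fintype Ω]
    (p : Ω → ℝ) (hp0 : ∀ ω, 0 ≤ p ω) (hp1 : ∑ ω, p ω = 1)
    (A Z : Ω → ℝ) (W : Ω → β)
    (hA : ∀ ω, A ω = 0 ∨ A ω = 1) (hZ : ∀ ω, Z ω = 0 ∨ Z ω = 1)
    (hposW : ∀ ω, 0 < p ω → 0 < Pr p (fun ω' => W ω' = W ω))
    (hposWZ : ∀ ω, 0 < p ω → ∀ z : ℝ, z = 0 ∨ z = 1 →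
      0 < Pr p (fun ω' => W ω' = W ω ∧ Z ω' = z))
    (δ : β → ℝ)
    (hδdef : ∀ ω, 0 < p ω →
      δ (W ω) = CE p A (fun ω' => W ω' = W ω ∧ Z ω' = 1)
        - CE p A (fun ω' => W ω' = W ω ∧ Z ω' = 0))
    (hδne : ∀ ω, 0 < p ω → δ (W ω) ≠ 0)
    -- user-specified reference treatment law f*(a|W)
    (fstar : ℝ → β → ℝ)
    (hfrange : ∀ w a, a = 0 ∨ a = 1 → 0 < fstar a w ∧ fstar a w < 1)
    (hfsum : ∀ w, fstar 0 w + fstar 1 w = 1) :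
    ∀ (g : ℝ → β → ℝ) (ω : Ω), 0 < p ω →
      CE p (fun ω' => g (A ω') (W ω') * sgn Z ω' * sgn A ω' * fstar (A ω') (W ω')
          / (PZ p W Z ω' * δ (W ω')))
        (fun ω' => W ω' = W ω)
        = g 0 (W ω) * fstar 0 (W ω) + g 1 (W ω) * fstar 1 (W ω) := by
  intro g ω hpω
  set w := W ω with hw
  set Pw := Pr p (fun ω' => W ω' = w) with hPw
  have hPwpos : 0 < Pw := hposW ω hpω
  set Q0 := Pr p (fun ω' => W ω' = w ∧ Z ω' = 0) with hQ0
  set Q1 := Pr p (fun ω' => W ω' = w ∧ Z ω' = 1) with hQ1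
  have hQ0pos : 0 < Q0 := hposWZ ω hpω 0 (Or.inl rfl)
  have hQ1pos : 0 < Q1 := hposWZ ω hpω 1 (Or.inr rfl)
  have hδ : δ w ≠ 0 := hδne ω hpω
  set M10 := ∑ ω', if W ω' = w ∧ A ω' = 1 ∧ Z ω' = 0 then p ω' else 0 with hM10
  set M11 := ∑ ω', if W ω' = w ∧ A ω' = 1 ∧ Z ω' = 1 then p ω' else 0 with hM11
  set M00 := ∑ ω', if W ω' = w ∧ A ω' = 0 ∧ Z ω' = 0 then p ω' else 0 with hM00
  set M01 := ∑ ω', if W ω' = w ∧ A ω' = 0 ∧ Z ω' = 1 then p ω' else 0 with hM01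
  -- CE of A given W=w, Z=z
  have hCE : ∀ z : ℝ, (∑ ω', if W ω' = w ∧ Z ω' = z then p ω' * A ω' else 0)
      = ∑ ω', if W ω' = w ∧ A ω' = 1 ∧ Z ω' = z then p ω' else 0 := by
    intro z
    refine Finset.sum_congr rfl fun ω' _ => ?_
    rcases hA ω' with hA' | hA' <;> by_cases hW : W ω' = w <;>
      by_cases hZ' : Z ω' = z <;> simp [hA', hW, hZ']
  have hsplit : ∀ z : ℝ,
      (∑ ω', if W ω' = w ∧ Z ω' = z then p ω' else 0)
      = (∑ ω', if W ω' = w ∧ A ω' = 0 ∧ Z ω' = z then p ω' else 0)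
        + ∑ ω', if W ω' = w ∧ A ω' = 1 ∧ Z ω' = z then p ω' else 0 := by
    intro z
    rw [← Finset.sum_add_distrib]
    refine Finset.sum_congr rfl fun ω' _ => ?_
    rcases hA ω' with hA' | hA' <;> by_cases hW : W ω' = w <;>
      by_cases hZ' : Z ω' = z <;> simp [hA', hW, hZ']
  have hQsum : ∀ z : ℝ, Pr p (fun ω' => W ω' = w ∧ Z ω' = z)
      = (∑ ω', if W ω' = w ∧ A ω' = 0 ∧ Z ω' = z then p ω' else 0)
        + ∑ ω', if W ω' = w ∧ A ω' = 1 ∧ Z ω' = z then p ω' else 0 := by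
    intro z
    unfold Pr
    rw [← Finset.sum_add_distrib]
    refine Finset.sum_congr rfl fun ω' _ => ?_
    rcases hA ω' with hA' | hA' <;> by_cases hW : W ω' = w <;>
      by_cases hZ' : Z ω' = z <;> simp [hA', hW, hZ']
  have hQ0sum : Q0 = M00 + M10 := by rw [hQ0, hQsum 0, hM00, hM10]
  have hQ1sum : Q1 = M01 + M11 := by rw [hQ1, hQsum 1, hM01, hM11]
  have hδval : δ w = M11 / Q1 - M10 / Q0 := by
    have h := hδdef ω hpω
    rw [← hw] at h
    have e1 : CE p A (fun ω' => W ω' = w ∧ Z ω' = 1) = M11 / Q1 := by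
      unfold CE
      rw [← hQ1, hM11]
      congr 1
      refine Finset.sum_congr rfl fun ω' _ => ?_
      rcases hA ω' with hA' | hA' <;> by_cases hW : W ω' = w <;>
        by_cases hZ' : Z ω' = (1:ℝ) <;> simp [hA', hW, hZ']
    have e0 : CE p A (fun ω' => W ω' = w ∧ Z ω' = 0) = M10 / Q0 := by
      unfold CE
      rw [← hQ0, hM10]
      congr 1
      refine Finset.sum_congr rfl fun ω' _ => ?_
      rcases hA ω' with hA' | hA' <;> by_cases hW : W ω' = w <;>
        by_cases hZ' : Z ω' = (0:ℝ) <;> simp [hA', hW, hZ']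
    rw [e1, e0] at h
    exact h
  -- main sum
  have hsum : (∑ ω', if W ω' = w then
        p ω' * (g (A ω') (W ω') * sgn Z ω' * sgn A ω' * fstar (A ω') (W ω')
          / (PZ p W Z ω' * δ (W ω'))) else 0)
      = (Pw / δ w) * (g 1 w * fstar 1 w * (M11 / Q1 - M10 / Q0)
          + g 0 w * fstar 0 w * (M00 / Q0 - M01 / Q1)) := by
    have hterm : ∀ ω', (if W ω' = w then
        p ω' * (g (A ω') (W ω') * sgn Z ω' * sgn A ω' * fstar (A ω') (W ω')
          / (PZ p W Z ω' * δ (W ω'))) else 0)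
      = (Pw / δ w) * (g 1 w * fstar 1 w *
            ((if W ω' = w ∧ A ω' = 1 ∧ Z ω' = 1 then p ω' else 0) / Q1
              - (if W ω' = w ∧ A ω' = 1 ∧ Z ω' = 0 then p ω' else 0) / Q0)
          + g 0 w * fstar 0 w *
            ((if W ω' = w ∧ A ω' = 0 ∧ Z ω' = 0 then p ω' else 0) / Q0
              - (if W ω' = w ∧ A ω' = 0 ∧ Z ω' = 1 then p ω' else 0) / Q1)) := by
      intro ω'
      by_cases hW : W ω' = w
      · rcases hA ω' with hA' | hA' <;> rcases hZ ω' with hZ' | hZ' <;>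
          · simp only [hW, hA', hZ', if_pos, sgn, PZ, ← hPw, ← hQ0, ← hQ1]
            norm_num
            field_simp
      · simp [hW]
    rw [Finset.sum_congr rfl fun ω' _ => hterm ω']
    rw [← Finset.mul_sum, Finset.sum_add_distrib, ← Finset.mul_sum, ← Finset.mul_sum]
    simp only [Finset.sum_sub_distrib, ← Finset.sum_div]
    rfl
  have hd2 : M00 / Q0 - M01 / Q1 = δ w := by
    have h0 : M00 = Q0 - M10 := by linarith
    have h1 : M01 = Q1 - M11 := by linarith
    rw [h0, h1, hδval]
    field_simp
    ring
  unfold CE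
  rw [hsum, ← hPw, hd2, ← hδval]
  field_simp
  ring
end
end

section
/- Let Y_0, Y_1, U, W be random variables and A, Z ∈ {0,1} on a finite probability space with all conditioning events of positive probability. Assume (Y_0, Y_1, U) ⫫ Z | W, Y_a ⫫ A | (U, W, Z) for a ∈ {0,1}, Y = Y_A, 0 < P(Z=1|W) < 1 a.s., E[A|U,W,Z] − E[A|U,W,Z=0] = δ(W)·Z with δ(W) ≠ 0 a.s., and let f*(a) ∈ (0,1) with f*(0)+f*(1)=1. Then for any bounded g: E[ g(A, Y) · (−1)^{1−Z}(−1)^{1−A} f*(A) / ( P(Z|W) δ(W) ) ] = Σ_{a∈{0,1}} E[ g(a, Y_a) ] f*(a). -/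
open Finset
open scoped Classical BigOperators

noncomputable section

variable {Ω : Type}

section Aux
variable [Fintype Ω]

lemma Pr_eq_sum_filter (p : Ω → ℝ) (s : Ω → Prop) [DecidablePred s] :
    Pr p s = ∑ ω ∈ univ.filter s, p ω := by
  rw [Finset.sum_filter]
  unfold Pr
  refine Finset.sum_congr rfl fun ω _ => ?_
  by_cases h : s ω
  · rw [if_pos h, if_pos h]
  · rw [if_neg h, if_neg h]

lemma Pr_congr (p : Ω → ℝ) (s t : Ω → Prop) (h : ∀ ω, s ω ↔ t ω) :
    Pr p s = Pr p t := by
  unfold Pr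
  exact Finset.sum_congr rfl fun ω _ => if_congr (h ω) rfl rfl

lemma exists_pos_of_Pr_pos (p : Ω → ℝ) (hp0 : ∀ ω, 0 ≤ p ω) (s : Ω → Prop)
    (h : 0 < Pr p s) : ∃ ω, 0 < p ω ∧ s ω := by
  unfold Pr at h
  obtain ⟨ω, -, hω⟩ := Finset.exists_ne_zero_of_sum_ne_zero (ne_of_gt h)
  by_cases hs : s ω
  · refine ⟨ω, ?_, hs⟩
    rw [if_pos hs] at hω
    exact lt_of_le_of_ne (hp0 ω) (Ne.symm hω)
  · simp [hs] at hω

lemma Pr_marg {ρ : Type} (p : Ω → ℝ) (X : Ω → ρ) (s : Ω → Prop) :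
    Pr p s = ∑ v ∈ univ.image X, Pr p (fun ω => X ω = v ∧ s ω) := by
  unfold Pr
  rw [Finset.sum_comm]
  refine Finset.sum_congr rfl fun ω _ => ?_
  rw [Finset.sum_eq_single_of_mem (X ω) (Finset.mem_image_of_mem X (mem_univ ω))
    (fun v _ hne => by rw [if_neg (fun h => hne h.1.symm)])]
  simp

lemma Pr_split (p : Ω → ℝ) (A : Ω → ℝ) (hA : ∀ ω, A ω = 0 ∨ A ω = 1) (s : Ω → Prop) :
    Pr p s = Pr p (fun ω => A ω = 1 ∧ s ω) + Pr p (fun ω => A ω = 0 ∧ s ω) := by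
  unfold Pr
  rw [← Finset.sum_add_distrib]
  refine Finset.sum_congr rfl fun ω _ => ?_
  rcases hA ω with h | h <;> by_cases hs : s ω <;> simp [h, hs]

lemma CE_binary (p : Ω → ℝ) (A : Ω → ℝ) (hA : ∀ ω, A ω = 0 ∨ A ω = 1) (s : Ω → Prop) :
    CE p A s = Pr p (fun ω => A ω = 1 ∧ s ω) / Pr p s := by
  unfold CE Pr
  congr 1
  refine Finset.sum_congr rfl fun ω _ => ?_
  rcases hA ω with h | h <;> by_cases hs : s ω <;> simp [h, hs]

lemma regroup {κ : Type} [DecidableEq κ] (key : Ω → κ) (μ ν F : Ω → ℝ)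
    (hF : ∀ ω ω', key ω = key ω' → F ω = F ω')
    (hmass : ∀ ω : Ω,
      ∑ ω' ∈ univ.filter (fun ω' => key ω' = key ω), μ ω'
        = ∑ ω' ∈ univ.filter (fun ω' => key ω' = key ω), ν ω') :
    ∑ ω, μ ω * F ω = ∑ ω, ν ω * F ω := by
  rw [← Finset.sum_fiberwise_of_maps_to
        (t := univ.image key) (g := key)
        (fun x _ => Finset.mem_image_of_mem key (mem_univ x)) (fun ω => μ ω * F ω),
      ← Finset.sum_fiberwise_of_maps_to
        (t := univ.image key) (g := key)
        (fun x _ => Finset.mem_image_of_mem key (mem_univ x)) (fun ω => ν ω * F ω)]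
  refine Finset.sum_congr rfl fun k hk => ?_
  obtain ⟨ω0, -, hω0⟩ := Finset.mem_image.mp hk
  have hconst : ∀ μ' : Ω → ℝ,
      ∑ ω' ∈ univ.filter (fun ω' => key ω' = k), μ' ω' * F ω'
        = (∑ ω' ∈ univ.filter (fun ω' => key ω' = k), μ' ω') * F ω0 := by
    intro μ'
    rw [Finset.sum_mul]
    refine Finset.sum_congr rfl fun ω' hω' => ?_
    have hkeq : key ω' = key ω0 := by
      rw [(Finset.mem_filter.mp hω').2, hω0]
    rw [hF ω' ω0 hkeq]
  rw [hconst μ, hconst ν, ← hω0, hmass ω0]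


end Aux

lemma per_a {β γ : Type} [Fintype Ω] (p : Ω → ℝ) (hp0 : ∀ ω, 0 ≤ p ω)
    (A Z YA : Ω → ℝ) (U : Ω → γ) (W : Ω → β) (δ : β → ℝ) (a sa : ℝ) (G : ℝ → ℝ)
    (hZ : ∀ ω, Z ω = 0 ∨ Z ω = 1)
    (hposW : ∀ ω, 0 < p ω → 0 < Pr p (fun ω' => W ω' = W ω))
    (hposWZ : ∀ ω, 0 < p ω → ∀ z : ℝ, z = 0 ∨ z = 1 →
      0 < Pr p (fun ω' => W ω' = W ω ∧ Z ω' = z))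
    (hposUWZ : ∀ ω, 0 < p ω → ∀ z : ℝ, z = 0 ∨ z = 1 →
      0 < Pr p (fun ω' => U ω' = U ω ∧ W ω' = W ω ∧ Z ω' = z))
    (hδne : ∀ ω, 0 < p ω → δ (W ω) ≠ 0)
    (hind : ∀ (y : ℝ) (u : γ) (w : β) (z : ℝ),
      Pr p (fun ω => YA ω = y ∧ A ω = a ∧ U ω = u ∧ W ω = w ∧ Z ω = z)
        * Pr p (fun ω => U ω = u ∧ W ω = w ∧ Z ω = z)
      = Pr p (fun ω => YA ω = y ∧ U ω = u ∧ W ω = w ∧ Z ω = z)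
        * Pr p (fun ω => A ω = a ∧ U ω = u ∧ W ω = w ∧ Z ω = z))
    (hYZ' : ∀ (y : ℝ) (u : γ) (w : β) (z : ℝ),
      Pr p (fun ω => YA ω = y ∧ U ω = u ∧ W ω = w ∧ Z ω = z)
        * Pr p (fun ω => W ω = w)
      = Pr p (fun ω => YA ω = y ∧ U ω = u ∧ W ω = w)
        * Pr p (fun ω => W ω = w ∧ Z ω = z))
    (hrdiff : ∀ ω, 0 < p ω →
      Pr p (fun ω' => A ω' = a ∧ U ω' = U ω ∧ W ω' = W ω ∧ Z ω' = 1)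
        / Pr p (fun ω' => U ω' = U ω ∧ W ω' = W ω ∧ Z ω' = 1)
      - Pr p (fun ω' => A ω' = a ∧ U ω' = U ω ∧ W ω' = W ω ∧ Z ω' = 0)
        / Pr p (fun ω' => U ω' = U ω ∧ W ω' = W ω ∧ Z ω' = 0)
      = sa * δ (W ω)) :
    ∑ ω, (if A ω = a then p ω else 0) * (G (YA ω) * sgn Z ω / (PZ p W Z ω * δ (W ω)))
      = sa * ∑ ω, p ω * G (YA ω) := by
  classical
  set r : Ω → ℝ := fun ω =>
    Pr p (fun ω' => A ω' = a ∧ U ω' = U ω ∧ W ω' = W ω ∧ Z ω' = Z ω)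
      / Pr p (fun ω' => U ω' = U ω ∧ W ω' = W ω ∧ Z ω' = Z ω) with hrdef
  have step1 : ∑ ω, (if A ω = a then p ω else 0)
        * (G (YA ω) * sgn Z ω / (PZ p W Z ω * δ (W ω)))
      = ∑ ω, (p ω * r ω) * (G (YA ω) * sgn Z ω / (PZ p W Z ω * δ (W ω))) := by
    refine regroup (fun ω => (YA ω, U ω, W ω, Z ω)) _ _ _ ?_ ?_
    · intro ω ω' hk
      simp only [Prod.mk.injEq] at hk
      obtain ⟨h1, h2, h3, h4⟩ := hk
      simp only [PZ, sgn, h1, h3, h4]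
    · intro ω0
      beta_reduce
      by_cases hall : ∀ ω' ∈ univ.filter
          (fun ω' => (YA ω', U ω', W ω', Z ω') = (YA ω0, U ω0, W ω0, Z ω0)), p ω' = 0
      · rw [Finset.sum_eq_zero fun ω' h => by simp [hall ω' h],
            Finset.sum_eq_zero fun ω' h => by simp [hall ω' h]]
      · push_neg at hall
        obtain ⟨ω1, hω1mem, hp1ne⟩ := hall
        have hp1 : 0 < p ω1 := lt_of_le_of_ne (hp0 ω1) (Ne.symm hp1ne)
        have hk := (Finset.mem_filter.mp hω1mem).2
        simp only [Prod.mk.injEq] at hk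
        obtain ⟨hYe, hUe, hWe, hZe⟩ := hk
        have hz01 : Z ω0 = 0 ∨ Z ω0 = 1 := hZe ▸ hZ ω1
        have hD : 0 < Pr p (fun ω' => U ω' = U ω0 ∧ W ω' = W ω0 ∧ Z ω' = Z ω0) := by
          have h := hposUWZ ω1 hp1 (Z ω0) hz01
          rwa [hUe, hWe] at h
        have hL : ∑ ω' ∈ univ.filter
              (fun ω' => (YA ω', U ω', W ω', Z ω') = (YA ω0, U ω0, W ω0, Z ω0)),
              (if A ω' = a then p ω' else 0)
            = Pr p (fun ω' => YA ω' = YA ω0 ∧ A ω' = a ∧ U ω' = U ω0 ∧ W ω' = W ω0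
                ∧ Z ω' = Z ω0) := by
          rw [Finset.sum_filter]
          unfold Pr
          refine Finset.sum_congr rfl fun ω' _ => ?_
          by_cases h1 : (YA ω', U ω', W ω', Z ω') = (YA ω0, U ω0, W ω0, Z ω0) <;>
            by_cases h2 : A ω' = a <;> simp_all [Prod.mk.injEq] <;> tauto
        have hM : ∑ ω' ∈ univ.filter
              (fun ω' => (YA ω', U ω', W ω', Z ω') = (YA ω0, U ω0, W ω0, Z ω0)), p ω'
            = Pr p (fun ω' => YA ω' = YA ω0 ∧ U ω' = U ω0 ∧ W ω' = W ω0 ∧ Z ω' = Z ω0) := by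
          rw [Pr_eq_sum_filter]
          refine Finset.sum_congr ?_ fun _ _ => rfl
          ext ω'; simp [Prod.mk.injEq]
        have hRconst : ∀ ω' ∈ univ.filter
              (fun ω' => (YA ω', U ω', W ω', Z ω') = (YA ω0, U ω0, W ω0, Z ω0)),
            p ω' * r ω' = p ω' *
              (Pr p (fun ω'' => A ω'' = a ∧ U ω'' = U ω0 ∧ W ω'' = W ω0 ∧ Z ω'' = Z ω0)
                / Pr p (fun ω'' => U ω'' = U ω0 ∧ W ω'' = W ω0 ∧ Z ω'' = Z ω0)) := by
          intro ω' hmem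
          have hk := (Finset.mem_filter.mp hmem).2
          simp only [Prod.mk.injEq] at hk
          rw [hrdef]
          simp only [hk.2.1, hk.2.2.1, hk.2.2.2]
        rw [hL, Finset.sum_congr rfl hRconst, ← Finset.sum_mul, hM]
        rw [mul_div_assoc', eq_div_iff hD.ne']
        exact hind (YA ω0) (U ω0) (W ω0) (Z ω0)
  have bridge : ∀ ω, (p ω * r ω) * (G (YA ω) * sgn Z ω / (PZ p W Z ω * δ (W ω)))
      = (p ω * r ω * sgn Z ω / PZ p W Z ω) * (G (YA ω) / δ (W ω)) := by
    intro ω; ring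
  have step2 : ∑ ω, (p ω * r ω * sgn Z ω / PZ p W Z ω) * (G (YA ω) / δ (W ω))
      = ∑ ω, (p ω * (sa * δ (W ω))) * (G (YA ω) / δ (W ω)) := by
    refine regroup (fun ω => (YA ω, U ω, W ω)) _ _ _ ?_ ?_
    · intro ω ω' hk
      simp only [Prod.mk.injEq] at hk
      simp only [hk.1, hk.2.2]
    · intro ω0
      beta_reduce
      by_cases hall : ∀ ω' ∈ univ.filter
          (fun ω' => (YA ω', U ω', W ω') = (YA ω0, U ω0, W ω0)), p ω' = 0
      · rw [Finset.sum_eq_zero fun ω' h => by simp [hall ω' h],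
            Finset.sum_eq_zero fun ω' h => by simp [hall ω' h]]
      · push_neg at hall
        obtain ⟨ω1, hω1mem, hp1ne⟩ := hall
        have hp1 : 0 < p ω1 := lt_of_le_of_ne (hp0 ω1) (Ne.symm hp1ne)
        have hk := (Finset.mem_filter.mp hω1mem).2
        simp only [Prod.mk.injEq] at hk
        obtain ⟨hYe, hUe, hWe⟩ := hk
        have hWpos : 0 < Pr p (fun ω' => W ω' = W ω0) := by
          have h := hposW ω1 hp1; rwa [hWe] at h
        have hWZ1 : 0 < Pr p (fun ω' => W ω' = W ω0 ∧ Z ω' = 1) := by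
          have h := hposWZ ω1 hp1 1 (Or.inr rfl); rwa [hWe] at h
        have hWZ0 : 0 < Pr p (fun ω' => W ω' = W ω0 ∧ Z ω' = 0) := by
          have h := hposWZ ω1 hp1 0 (Or.inl rfl); rwa [hWe] at h
        have hD1 : 0 < Pr p (fun ω' => U ω' = U ω0 ∧ W ω' = W ω0 ∧ Z ω' = 1) := by
          have h := hposUWZ ω1 hp1 1 (Or.inr rfl); rwa [hUe, hWe] at h
        have hD0 : 0 < Pr p (fun ω' => U ω' = U ω0 ∧ W ω' = W ω0 ∧ Z ω' = 0) := by
          have h := hposUWZ ω1 hp1 0 (Or.inl rfl); rwa [hUe, hWe] at h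
        set t := univ.filter (fun ω' => (YA ω', U ω', W ω') = (YA ω0, U ω0, W ω0)) with ht
        -- split by Z
        rw [← Finset.sum_filter_add_sum_filter_not t (fun ω' => Z ω' = 1)]
        have hset1 : t.filter (fun ω' => Z ω' = 1)
            = univ.filter (fun ω' => YA ω' = YA ω0 ∧ U ω' = U ω0 ∧ W ω' = W ω0
                ∧ Z ω' = 1) := by
          rw [ht, Finset.filter_filter]
          ext ω'; simp only [Finset.mem_filter, Finset.mem_univ, true_and, Prod.mk.injEq]
          tauto
        have hset0 : t.filter (fun ω' => ¬ Z ω' = 1)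
            = univ.filter (fun ω' => YA ω' = YA ω0 ∧ U ω' = U ω0 ∧ W ω' = W ω0
                ∧ Z ω' = 0) := by
          rw [ht, Finset.filter_filter]
          ext ω'; simp only [Finset.mem_filter, Finset.mem_univ, true_and, Prod.mk.injEq]
          rcases hZ ω' with h | h <;> simp [h]
        have hpart1 : ∑ ω' ∈ t.filter (fun ω' => Z ω' = 1),
              (p ω' * r ω' * sgn Z ω' / PZ p W Z ω')
            = Pr p (fun ω' => YA ω' = YA ω0 ∧ U ω' = U ω0 ∧ W ω' = W ω0)
              * (Pr p (fun ω'' => A ω'' = a ∧ U ω'' = U ω0 ∧ W ω'' = W ω0 ∧ Z ω'' = 1)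
                / Pr p (fun ω'' => U ω'' = U ω0 ∧ W ω'' = W ω0 ∧ Z ω'' = 1)) := by
          have hsummand : ∀ ω' ∈ t.filter (fun ω' => Z ω' = 1),
              p ω' * r ω' * sgn Z ω' / PZ p W Z ω'
              = p ω' * ((Pr p (fun ω'' => A ω'' = a ∧ U ω'' = U ω0 ∧ W ω'' = W ω0
                    ∧ Z ω'' = 1)
                  / Pr p (fun ω'' => U ω'' = U ω0 ∧ W ω'' = W ω0 ∧ Z ω'' = 1))
                * (Pr p (fun ω' => W ω' = W ω0)
                  / Pr p (fun ω' => W ω' = W ω0 ∧ Z ω' = 1))) := by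
            intro ω' hmem
            rw [Finset.mem_filter, ht, Finset.mem_filter] at hmem
            obtain ⟨⟨-, hkey⟩, hz1⟩ := hmem
            simp only [Prod.mk.injEq] at hkey
            have hsgn : sgn Z ω' = 1 := by simp [sgn, hz1]
            have hPZ : PZ p W Z ω' = Pr p (fun ω'' => W ω'' = W ω0 ∧ Z ω'' = 1)
                / Pr p (fun ω'' => W ω'' = W ω0) := by
              simp only [PZ, hkey.2.2, hz1]
            have hr : r ω' = Pr p (fun ω'' => A ω'' = a ∧ U ω'' = U ω0 ∧ W ω'' = W ω0
                  ∧ Z ω'' = 1)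
                / Pr p (fun ω'' => U ω'' = U ω0 ∧ W ω'' = W ω0 ∧ Z ω'' = 1) := by
              rw [hrdef]
              simp only [hkey.2.1, hkey.2.2, hz1]
            rw [hsgn, hPZ, hr, mul_one, div_div_eq_mul_div]
            ring
          rw [Finset.sum_congr rfl hsummand, ← Finset.sum_mul, hset1,
            ← Pr_eq_sum_filter]
          have hyz := hYZ' (YA ω0) (U ω0) (W ω0) 1
          have h2 : Pr p (fun ω' => YA ω' = YA ω0 ∧ U ω' = U ω0 ∧ W ω' = W ω0 ∧ Z ω' = 1)
              * (Pr p (fun ω' => W ω' = W ω0)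
                / Pr p (fun ω' => W ω' = W ω0 ∧ Z ω' = 1))
              = Pr p (fun ω' => YA ω' = YA ω0 ∧ U ω' = U ω0 ∧ W ω' = W ω0) := by
            rw [← mul_div_assoc, hyz, mul_div_assoc, div_self hWZ1.ne', mul_one]
          rw [← h2]
          ring
        have hpart0 : ∑ ω' ∈ t.filter (fun ω' => ¬ Z ω' = 1),
              (p ω' * r ω' * sgn Z ω' / PZ p W Z ω')
            = -(Pr p (fun ω' => YA ω' = YA ω0 ∧ U ω' = U ω0 ∧ W ω' = W ω0)
              * (Pr p (fun ω'' => A ω'' = a ∧ U ω'' = U ω0 ∧ W ω'' = W ω0 ∧ Z ω'' = 0)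
                / Pr p (fun ω'' => U ω'' = U ω0 ∧ W ω'' = W ω0 ∧ Z ω'' = 0))) := by
          have hsummand : ∀ ω' ∈ t.filter (fun ω' => ¬ Z ω' = 1),
              p ω' * r ω' * sgn Z ω' / PZ p W Z ω'
              = p ω' * (-((Pr p (fun ω'' => A ω'' = a ∧ U ω'' = U ω0 ∧ W ω'' = W ω0
                    ∧ Z ω'' = 0)
                  / Pr p (fun ω'' => U ω'' = U ω0 ∧ W ω'' = W ω0 ∧ Z ω'' = 0))
                * (Pr p (fun ω' => W ω' = W ω0)
                  / Pr p (fun ω' => W ω' = W ω0 ∧ Z ω' = 0)))) := by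
            intro ω' hmem
            rw [Finset.mem_filter, ht, Finset.mem_filter] at hmem
            obtain ⟨⟨-, hkey⟩, hz1⟩ := hmem
            have hz0 : Z ω' = 0 := (hZ ω').resolve_right hz1
            simp only [Prod.mk.injEq] at hkey
            have hsgn : sgn Z ω' = -1 := by simp [sgn, hz0]
            have hPZ : PZ p W Z ω' = Pr p (fun ω'' => W ω'' = W ω0 ∧ Z ω'' = 0)
                / Pr p (fun ω'' => W ω'' = W ω0) := by
              simp only [PZ, hkey.2.2, hz0]
            have hr : r ω' = Pr p (fun ω'' => A ω'' = a ∧ U ω'' = U ω0 ∧ W ω'' = W ω0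
                  ∧ Z ω'' = 0)
                / Pr p (fun ω'' => U ω'' = U ω0 ∧ W ω'' = W ω0 ∧ Z ω'' = 0) := by
              rw [hrdef]
              simp only [hkey.2.1, hkey.2.2, hz0]
            rw [hsgn, hPZ, hr, div_div_eq_mul_div]
            ring
          rw [Finset.sum_congr rfl hsummand, ← Finset.sum_mul, hset0,
            ← Pr_eq_sum_filter]
          have hyz := hYZ' (YA ω0) (U ω0) (W ω0) 0
          have h2 : Pr p (fun ω' => YA ω' = YA ω0 ∧ U ω' = U ω0 ∧ W ω' = W ω0 ∧ Z ω' = 0)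
              * (Pr p (fun ω' => W ω' = W ω0)
                / Pr p (fun ω' => W ω' = W ω0 ∧ Z ω' = 0))
              = Pr p (fun ω' => YA ω' = YA ω0 ∧ U ω' = U ω0 ∧ W ω' = W ω0) := by
            rw [← mul_div_assoc, hyz, mul_div_assoc, div_self hWZ0.ne', mul_one]
          rw [← h2]
          ring
        have hRHS : ∑ ω' ∈ t, p ω' * (sa * δ (W ω'))
            = Pr p (fun ω' => YA ω' = YA ω0 ∧ U ω' = U ω0 ∧ W ω' = W ω0)
              * (sa * δ (W ω0)) := by
          have hsummand : ∀ ω' ∈ t, p ω' * (sa * δ (W ω'))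
              = p ω' * (sa * δ (W ω0)) := by
            intro ω' hmem
            rw [ht, Finset.mem_filter] at hmem
            have hkey := hmem.2
            simp only [Prod.mk.injEq] at hkey
            rw [hkey.2.2]
          rw [Finset.sum_congr rfl hsummand, ← Finset.sum_mul]
          congr 1
          rw [Pr_eq_sum_filter, ht]
          refine Finset.sum_congr ?_ fun _ _ => rfl
          ext ω'; simp [Prod.mk.injEq]
        rw [hpart1, hpart0, hRHS]
        have hrd := hrdiff ω1 hp1
        rw [hUe, hWe] at hrd
        rw [← hrd]
        ring
  have step3 : ∑ ω, (p ω * (sa * δ (W ω))) * (G (YA ω) / δ (W ω))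
      = sa * ∑ ω, p ω * G (YA ω) := by
    rw [Finset.mul_sum]
    refine Finset.sum_congr rfl fun ω _ => ?_
    by_cases hp : p ω = 0
    · simp [hp]
    · have hd := hδne ω (lt_of_le_of_ne (hp0 ω) (Ne.symm hp))
      field_simp
  rw [step1, Finset.sum_congr rfl fun ω _ => bridge ω, step2, step3]


/-- Full single-period (J=1) statement of Lemma 2: the composite signed IV weight
recovers the mixture over counterfactual outcomes under the reference law f*. -/
theorem stmt11 {β γ : Type} [Fintype Ω]
    (p : Ω → ℝ) (hp0 : ∀ ω, 0 ≤ p ω) (hp1 : ∑ ω, p ω = 1)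
    (A Z Y Y0 Y1 : Ω → ℝ) (U : Ω → γ) (W : Ω → β)
    (hA : ∀ ω, A ω = 0 ∨ A ω = 1) (hZ : ∀ ω, Z ω = 0 ∨ Z ω = 1)
    -- all conditioning events of positive probability
    (hposW : ∀ ω, 0 < p ω → 0 < Pr p (fun ω' => W ω' = W ω))
    (hposWZ : ∀ ω, 0 < p ω → ∀ z : ℝ, z = 0 ∨ z = 1 →
      0 < Pr p (fun ω' => W ω' = W ω ∧ Z ω' = z))
    (hposUWZ : ∀ ω, 0 < p ω → ∀ z : ℝ, z = 0 ∨ z = 1 →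
      0 < Pr p (fun ω' => U ω' = U ω ∧ W ω' = W ω ∧ Z ω' = z))
    -- (Y0, Y1, U) ⫫ Z | W
    (hYZ : ∀ (y0 y1 : ℝ) (u : γ) (z : ℝ) (w : β),
      Pr p (fun ω => Y0 ω = y0 ∧ Y1 ω = y1 ∧ U ω = u ∧ Z ω = z ∧ W ω = w)
        * Pr p (fun ω => W ω = w)
      = Pr p (fun ω => Y0 ω = y0 ∧ Y1 ω = y1 ∧ U ω = u ∧ W ω = w)
        * Pr p (fun ω => Z ω = z ∧ W ω = w))
    -- Y_a ⫫ A | (U, W, Z) for a ∈ {0,1}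
    (hYA : ∀ a : ℝ, a = 0 ∨ a = 1 → ∀ (y α : ℝ) (u : γ) (w : β) (z : ℝ),
      Pr p (fun ω => (if a = 1 then Y1 ω else Y0 ω) = y ∧ A ω = α
            ∧ U ω = u ∧ W ω = w ∧ Z ω = z)
        * Pr p (fun ω => U ω = u ∧ W ω = w ∧ Z ω = z)
      = Pr p (fun ω => (if a = 1 then Y1 ω else Y0 ω) = y
            ∧ U ω = u ∧ W ω = w ∧ Z ω = z)
        * Pr p (fun ω => A ω = α ∧ U ω = u ∧ W ω = w ∧ Z ω = z))
    -- consistency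
    (hY : ∀ ω, Y ω = if A ω = 1 then Y1 ω else Y0 ω)
    -- independent compliance type: E[A|U,W,Z] − E[A|U,W,Z=0] = δ(W)·Z
    (δ : β → ℝ)
    (hδ : ∀ ω, 0 < p ω →
      CE p A (fun ω' => U ω' = U ω ∧ W ω' = W ω ∧ Z ω' = Z ω)
        - CE p A (fun ω' => U ω' = U ω ∧ W ω' = W ω ∧ Z ω' = 0)
        = δ (W ω) * Z ω)
    (hδne : ∀ ω, 0 < p ω → δ (W ω) ≠ 0)
    -- reference treatment law
    (fstar : ℝ → ℝ)
    (hfrange : ∀ a : ℝ, a = 0 ∨ a = 1 → 0 < fstar a ∧ fstar a < 1)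
    (hfsum : fstar 0 + fstar 1 = 1) :
    ∀ g : ℝ → ℝ → ℝ,
      E p (fun ω => g (A ω) (Y ω) * sgn Z ω * sgn A ω * fstar (A ω)
            / (PZ p W Z ω * δ (W ω)))
        = E p (fun ω => g 0 (Y0 ω)) * fstar 0 + E p (fun ω => g 1 (Y1 ω)) * fstar 1 := by
  intro g
  classical
  -- marginalized IV-independence for Y1 and Y0
  have hYZ1 : ∀ (y : ℝ) (u : γ) (w : β) (z : ℝ),
      Pr p (fun ω => Y1 ω = y ∧ U ω = u ∧ W ω = w ∧ Z ω = z)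
        * Pr p (fun ω => W ω = w)
      = Pr p (fun ω => Y1 ω = y ∧ U ω = u ∧ W ω = w)
        * Pr p (fun ω => W ω = w ∧ Z ω = z) := by
    intro y u w z
    have h1 : Pr p (fun ω => Y1 ω = y ∧ U ω = u ∧ W ω = w ∧ Z ω = z)
        = ∑ v ∈ univ.image Y0,
            Pr p (fun ω => Y0 ω = v ∧ Y1 ω = y ∧ U ω = u ∧ Z ω = z ∧ W ω = w) := by
      rw [Pr_marg p Y0]
      exact Finset.sum_congr rfl fun v _ => Pr_congr _ _ _ fun ω => by tauto
    have h2 : Pr p (fun ω => Y1 ω = y ∧ U ω = u ∧ W ω = w)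
        = ∑ v ∈ univ.image Y0,
            Pr p (fun ω => Y0 ω = v ∧ Y1 ω = y ∧ U ω = u ∧ W ω = w) := by
      rw [Pr_marg p Y0]
    have h3 : Pr p (fun ω => W ω = w ∧ Z ω = z) = Pr p (fun ω => Z ω = z ∧ W ω = w) :=
      Pr_congr _ _ _ fun ω => by tauto
    rw [h1, h2, h3, Finset.sum_mul, Finset.sum_mul]
    exact Finset.sum_congr rfl fun v _ => hYZ v y u z w
  have hYZ0 : ∀ (y : ℝ) (u : γ) (w : β) (z : ℝ),
      Pr p (fun ω => Y0 ω = y ∧ U ω = u ∧ W ω = w ∧ Z ω = z)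
        * Pr p (fun ω => W ω = w)
      = Pr p (fun ω => Y0 ω = y ∧ U ω = u ∧ W ω = w)
        * Pr p (fun ω => W ω = w ∧ Z ω = z) := by
    intro y u w z
    have h1 : Pr p (fun ω => Y0 ω = y ∧ U ω = u ∧ W ω = w ∧ Z ω = z)
        = ∑ v ∈ univ.image Y1,
            Pr p (fun ω => Y0 ω = y ∧ Y1 ω = v ∧ U ω = u ∧ Z ω = z ∧ W ω = w) := by
      rw [Pr_marg p Y1]
      exact Finset.sum_congr rfl fun v _ => Pr_congr _ _ _ fun ω => by tauto
    have h2 : Pr p (fun ω => Y0 ω = y ∧ U ω = u ∧ W ω = w)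
        = ∑ v ∈ univ.image Y1,
            Pr p (fun ω => Y0 ω = y ∧ Y1 ω = v ∧ U ω = u ∧ W ω = w) := by
      rw [Pr_marg p Y1]
      exact Finset.sum_congr rfl fun v _ => Pr_congr _ _ _ fun ω => by tauto
    have h3 : Pr p (fun ω => W ω = w ∧ Z ω = z) = Pr p (fun ω => Z ω = z ∧ W ω = w) :=
      Pr_congr _ _ _ fun ω => by tauto
    rw [h1, h2, h3, Finset.sum_mul, Finset.sum_mul]
    exact Finset.sum_congr rfl fun v _ => hYZ y v u z w
  -- difference of conditional treatment probabilities
  have hqd : ∀ ω, 0 < p ω →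
      Pr p (fun ω' => A ω' = 1 ∧ U ω' = U ω ∧ W ω' = W ω ∧ Z ω' = 1)
        / Pr p (fun ω' => U ω' = U ω ∧ W ω' = W ω ∧ Z ω' = 1)
      - Pr p (fun ω' => A ω' = 1 ∧ U ω' = U ω ∧ W ω' = W ω ∧ Z ω' = 0)
        / Pr p (fun ω' => U ω' = U ω ∧ W ω' = W ω ∧ Z ω' = 0)
      = δ (W ω) := by
    intro ω hp
    obtain ⟨ω2, hp2, hU2, hW2, hZ2⟩ :=
      exists_pos_of_Pr_pos p hp0 _ (hposUWZ ω hp 1 (Or.inr rfl))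
    have h := hδ ω2 hp2
    rw [CE_binary p A hA, CE_binary p A hA, hU2, hW2, hZ2] at h
    simpa using h
  have hrd1 : ∀ ω, 0 < p ω →
      Pr p (fun ω' => A ω' = 1 ∧ U ω' = U ω ∧ W ω' = W ω ∧ Z ω' = 1)
        / Pr p (fun ω' => U ω' = U ω ∧ W ω' = W ω ∧ Z ω' = 1)
      - Pr p (fun ω' => A ω' = 1 ∧ U ω' = U ω ∧ W ω' = W ω ∧ Z ω' = 0)
        / Pr p (fun ω' => U ω' = U ω ∧ W ω' = W ω ∧ Z ω' = 0)
      = (1 : ℝ) * δ (W ω) := by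
    intro ω hp
    rw [one_mul]
    exact hqd ω hp
  have hrd0 : ∀ ω, 0 < p ω →
      Pr p (fun ω' => A ω' = 0 ∧ U ω' = U ω ∧ W ω' = W ω ∧ Z ω' = 1)
        / Pr p (fun ω' => U ω' = U ω ∧ W ω' = W ω ∧ Z ω' = 1)
      - Pr p (fun ω' => A ω' = 0 ∧ U ω' = U ω ∧ W ω' = W ω ∧ Z ω' = 0)
        / Pr p (fun ω' => U ω' = U ω ∧ W ω' = W ω ∧ Z ω' = 0)
      = (-1 : ℝ) * δ (W ω) := by
    intro ω hp
    have hD1 := hposUWZ ω hp 1 (Or.inr rfl)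
    have hD0 := hposUWZ ω hp 0 (Or.inl rfl)
    have hs1 := Pr_split p A hA (fun ω' => U ω' = U ω ∧ W ω' = W ω ∧ Z ω' = 1)
    have hs0 := Pr_split p A hA (fun ω' => U ω' = U ω ∧ W ω' = W ω ∧ Z ω' = 0)
    beta_reduce at hs1 hs0
    have hq := hqd ω hp
    have e1 : Pr p (fun ω' => A ω' = 0 ∧ U ω' = U ω ∧ W ω' = W ω ∧ Z ω' = 1)
        = Pr p (fun ω' => U ω' = U ω ∧ W ω' = W ω ∧ Z ω' = 1)
          - Pr p (fun ω' => A ω' = 1 ∧ U ω' = U ω ∧ W ω' = W ω ∧ Z ω' = 1) := by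
      linarith
    have e0 : Pr p (fun ω' => A ω' = 0 ∧ U ω' = U ω ∧ W ω' = W ω ∧ Z ω' = 0)
        = Pr p (fun ω' => U ω' = U ω ∧ W ω' = W ω ∧ Z ω' = 0)
          - Pr p (fun ω' => A ω' = 1 ∧ U ω' = U ω ∧ W ω' = W ω ∧ Z ω' = 0) := by
      linarith
    rw [e1, e0, sub_div, sub_div, div_self hD1.ne', div_self hD0.ne']
    linarith
  -- independence instantiations
  have hind1 : ∀ (y : ℝ) (u : γ) (w : β) (z : ℝ),
      Pr p (fun ω => Y1 ω = y ∧ A ω = 1 ∧ U ω = u ∧ W ω = w ∧ Z ω = z)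
        * Pr p (fun ω => U ω = u ∧ W ω = w ∧ Z ω = z)
      = Pr p (fun ω => Y1 ω = y ∧ U ω = u ∧ W ω = w ∧ Z ω = z)
        * Pr p (fun ω => A ω = 1 ∧ U ω = u ∧ W ω = w ∧ Z ω = z) := by
    intro y u w z
    have h := hYA 1 (Or.inr rfl) y 1 u w z
    simpa using h
  have hind0 : ∀ (y : ℝ) (u : γ) (w : β) (z : ℝ),
      Pr p (fun ω => Y0 ω = y ∧ A ω = 0 ∧ U ω = u ∧ W ω = w ∧ Z ω = z)
        * Pr p (fun ω => U ω = u ∧ W ω = w ∧ Z ω = z)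
      = Pr p (fun ω => Y0 ω = y ∧ U ω = u ∧ W ω = w ∧ Z ω = z)
        * Pr p (fun ω => A ω = 0 ∧ U ω = u ∧ W ω = w ∧ Z ω = z) := by
    intro y u w z
    have h := hYA 0 (Or.inl rfl) y 0 u w z
    simpa using h
  have key1 := per_a p hp0 A Z Y1 U W δ 1 1 (g 1) hZ hposW hposWZ hposUWZ hδne
    hind1 hYZ1 hrd1
  have key0 := per_a p hp0 A Z Y0 U W δ 0 (-1) (g 0) hZ hposW hposWZ hposUWZ hδne
    hind0 hYZ0 hrd0
  have hsplit : ∀ ω, p ω * (g (A ω) (Y ω) * sgn Z ω * sgn A ω * fstar (A ω)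
        / (PZ p W Z ω * δ (W ω)))
      = (if A ω = 1 then p ω else 0)
          * (g 1 (Y1 ω) * sgn Z ω / (PZ p W Z ω * δ (W ω))) * fstar 1
        + (if A ω = 0 then p ω else 0)
          * (g 0 (Y0 ω) * sgn Z ω / (PZ p W Z ω * δ (W ω))) * (-fstar 0) := by
    intro ω
    rcases hA ω with h | h
    · have hsA : sgn A ω = -1 := by simp [sgn, h]
      have hY' : Y ω = Y0 ω := by rw [hY ω, if_neg (by rw [h]; norm_num)]
      rw [hY', hsA, h, if_neg (by norm_num : ¬(0:ℝ) = 1), if_pos rfl]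
      ring
    · have hsA : sgn A ω = 1 := by simp [sgn, h]
      have hY' : Y ω = Y1 ω := by rw [hY ω, if_pos h]
      rw [hY', hsA, h, if_pos rfl, if_neg (by norm_num : ¬(1:ℝ) = 0)]
      ring
  unfold E
  calc ∑ ω, p ω * (g (A ω) (Y ω) * sgn Z ω * sgn A ω * fstar (A ω)
        / (PZ p W Z ω * δ (W ω)))
      = ∑ ω, ((if A ω = 1 then p ω else 0)
          * (g 1 (Y1 ω) * sgn Z ω / (PZ p W Z ω * δ (W ω))) * fstar 1
        + (if A ω = 0 then p ω else 0)
          * (g 0 (Y0 ω) * sgn Z ω / (PZ p W Z ω * δ (W ω))) * (-fstar 0)) :=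
        Finset.sum_congr rfl fun ω _ => hsplit ω
    _ = (∑ ω, (if A ω = 1 then p ω else 0)
          * (g 1 (Y1 ω) * sgn Z ω / (PZ p W Z ω * δ (W ω)))) * fstar 1
        + (∑ ω, (if A ω = 0 then p ω else 0)
          * (g 0 (Y0 ω) * sgn Z ω / (PZ p W Z ω * δ (W ω)))) * (-fstar 0) := by
        rw [Finset.sum_add_distrib, ← Finset.sum_mul, ← Finset.sum_mul]
    _ = ((1:ℝ) * ∑ ω, p ω * g 1 (Y1 ω)) * fstar 1
        + ((-1:ℝ) * ∑ ω, p ω * g 0 (Y0 ω)) * (-fstar 0) := by rw [key1, key0]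
    _ = (∑ ω, p ω * g 0 (Y0 ω)) * fstar 0 + (∑ ω, p ω * g 1 (Y1 ω)) * fstar 1 := by
        ring
end
end

section
/- Let A, Z ∈ {0,1} and W on a finite probability space with 0 < P(Z=1|W) < 1 a.s. and δ(W) := E[A|W,Z=1] − E[A|W,Z=0] ≠ 0 a.s. Let D be any bounded random variable and define Ψ(W,z) := E[ D · (−1)^{1−A} f*(A|W) / δ(W) | W, Z=z ] for a fixed f*(·|W) ∈ (0,1), and Ψ̃(W) := Ψ(W,1) − Ψ(W,0), ε := A − E[A|W,Z]. Then E[ (−1)^{1−Z} Ψ(W,Z)/P(Z|W) − Ψ̃(W) − ε Ψ̃(W) · (−1)^{1−Z} / ( P(Z|W) δ(W) ) | W ] = 0 almost surely. -/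
/-! Conditionally on `W = w`, split the sample space by the value of the binary instrument `Z`.
On the cell `Z = z` the weight `sgn z / P(z | w)` and the factor multiplying the residual
`ε = A - E[A | W, Z]` are constants, so the residual term integrates to zero there, while the
weighted term integrates to `sgn z · Ψ(w, z) · P(W = w)`. Summing the two cells gives
`P(W = w) · (Ψ(w, 1) - Ψ(w, 0))`, which the subtracted `Ψ̃(w)` cancels. -/

open Finset
open scoped Classical BigOperators

noncomputable section

variable {Ω : Type}

section

variable [Fintype Ω]

def eventSum (s : Ω → Prop) (F : Ω → ℝ) : ℝ := ∑ ω, if s ω then F ω else 0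

lemma Pr_eq_eventSum (p : Ω → ℝ) (s : Ω → Prop) : Pr p s = eventSum s p := rfl

lemma CE_eq_eventSum_div (p f : Ω → ℝ) (s : Ω → Prop) :
    CE p f s = eventSum s (fun ω => p ω * f ω) / Pr p s := rfl

lemma eventSum_eq_eventSum_and_add_eventSum_and {Z : Ω → ℝ} (hZ : ∀ ω, Z ω = 0 ∨ Z ω = 1)
    (s : Ω → Prop) (F : Ω → ℝ) :
    eventSum s F = eventSum (fun ω => s ω ∧ Z ω = 1) F + eventSum (fun ω => s ω ∧ Z ω = 0) F := by
  rw [eventSum, eventSum, eventSum, ← sum_add_distrib]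
  refine sum_congr rfl fun ω _ => ?_
  rcases hZ ω with hz | hz <;> by_cases hs : s ω <;> simp [hs, hz]

lemma eventSum_eq_mul_Pr_of_eq_sub_residual {p f g : Ω → ℝ} {s : Ω → Prop}
    (hs : Pr p s ≠ 0) (a b : ℝ) (hg : ∀ ω, s ω → g ω = a - (f ω - CE p f s) * b) :
    eventSum s (fun ω => p ω * g ω) = a * Pr p s := by
  have hnum : eventSum s (fun ω => p ω * f ω) = CE p f s * Pr p s := by
    rw [CE_eq_eventSum_div, div_mul_cancel₀ _ hs]
  calc eventSum s (fun ω => p ω * g ω)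
      = (a + b * CE p f s) * Pr p s - b * eventSum s (fun ω => p ω * f ω) := by
        simp only [eventSum, Pr, mul_sum, ← sum_sub_distrib]
        refine sum_congr rfl fun ω _ => ?_
        by_cases h : s ω
        · simp only [h, if_true, hg ω h]
          ring
        · simp [h]
    _ = a * Pr p s := by
        rw [hnum]
        ring

end

theorem stmt12_general {β : Type} [Fintype Ω]
    (p : Ω → ℝ)
    (A Z : Ω → ℝ) (W : Ω → β)
    (hZ : ∀ ω, Z ω = 0 ∨ Z ω = 1)
    (hposWZ : ∀ ω, 0 < p ω → ∀ z : ℝ, z = 0 ∨ z = 1 →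
      0 < Pr p (fun ω' => W ω' = W ω ∧ Z ω' = z))
    (δ : β → ℝ)
    -- Ψ(W,z) := E[D·(−1)^{1−A} f*(A|W)/δ(W) | W, Z=z]
    (Ψ : β → ℝ → ℝ) :
    ∀ ω, 0 < p ω →
      CE p (fun ω' =>
          sgn Z ω' * Ψ (W ω') (Z ω') / PZ p W Z ω'
          - (Ψ (W ω') 1 - Ψ (W ω') 0)
          - (A ω' - CE p A (fun ω'' => W ω'' = W ω' ∧ Z ω'' = Z ω'))
            * (Ψ (W ω') 1 - Ψ (W ω') 0) * sgn Z ω'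
            / (PZ p W Z ω' * δ (W ω')))
        (fun ω' => W ω' = W ω) = 0 := by
  intro ω hpω
  set w := W ω
  set Pw := Pr p (fun ω' => W ω' = w)
  set P : ℝ → ℝ := fun z => Pr p (fun ω' => W ω' = w ∧ Z ω' = z) with hP
  have hP1 : 0 < P 1 := hposWZ ω hpω 1 (Or.inr rfl)
  have hP0 : 0 < P 0 := hposWZ ω hpω 0 (Or.inl rfl)
  have hPw : Pw = P 1 + P 0 := by
    simp only [Pw, hP, Pr_eq_eventSum]
    exact eventSum_eq_eventSum_and_add_eventSum_and hZ _ p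
  have hPw0 : P 1 + P 0 ≠ 0 := (add_pos hP1 hP0).ne'
  rw [CE_eq_eventSum_div, div_eq_zero_iff, eventSum_eq_eventSum_and_add_eventSum_and hZ,
    eventSum_eq_mul_Pr_of_eq_sub_residual (f := A) hP1.ne' (Ψ w 1 / (P 1 / Pw) - (Ψ w 1 - Ψ w 0))
      ((Ψ w 1 - Ψ w 0) / (P 1 / Pw * δ w)),
    eventSum_eq_mul_Pr_of_eq_sub_residual (f := A) hP0.ne' (-Ψ w 0 / (P 0 / Pw) - (Ψ w 1 - Ψ w 0))
      (-(Ψ w 1 - Ψ w 0) / (P 0 / Pw * δ w))]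
  · left
    rw [hPw]
    field_simp
    ring
  all_goals
    rintro ω' ⟨hW, hZz⟩
    simp only [hP, PZ, sgn, hW, hZz, if_pos, if_neg zero_ne_one]
    ring

/-- Single-period mean-zero property of the augmentation term in the influence
function of Lemma 3 when all nuisance functions are correctly specified. -/
theorem stmt12 {β : Type} [Fintype Ω]
    (p : Ω → ℝ) (hp0 : ∀ ω, 0 ≤ p ω) (hp1 : ∑ ω, p ω = 1)
    (A Z D : Ω → ℝ) (W : Ω → β)
    (hA : ∀ ω, A ω = 0 ∨ A ω = 1) (hZ : ∀ ω, Z ω = 0 ∨ Z ω = 1)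
    (hposW : ∀ ω, 0 < p ω → 0 < Pr p (fun ω' => W ω' = W ω))
    (hposWZ : ∀ ω, 0 < p ω → ∀ z : ℝ, z = 0 ∨ z = 1 →
      0 < Pr p (fun ω' => W ω' = W ω ∧ Z ω' = z))
    (δ : β → ℝ)
    (hδdef : ∀ ω, 0 < p ω →
      δ (W ω) = CE p A (fun ω' => W ω' = W ω ∧ Z ω' = 1)
        - CE p A (fun ω' => W ω' = W ω ∧ Z ω' = 0))
    (hδne : ∀ ω, 0 < p ω → δ (W ω) ≠ 0)
    (fstar : ℝ → β → ℝ)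
    (hfrange : ∀ w a, a = 0 ∨ a = 1 → 0 < fstar a w ∧ fstar a w < 1)
    -- Ψ(W,z) := E[D·(−1)^{1−A} f*(A|W)/δ(W) | W, Z=z]
    (Ψ : β → ℝ → ℝ)
    (hΨ : ∀ ω, 0 < p ω → ∀ z : ℝ, z = 0 ∨ z = 1 →
      Ψ (W ω) z = CE p (fun ω' => D ω' * sgn A ω' * fstar (A ω') (W ω') / δ (W ω'))
        (fun ω' => W ω' = W ω ∧ Z ω' = z)) :
    ∀ ω, 0 < p ω →
      CE p (fun ω' =>
          sgn Z ω' * Ψ (W ω') (Z ω') / PZ p W Z ω'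
          - (Ψ (W ω') 1 - Ψ (W ω') 0)
          - (A ω' - CE p A (fun ω'' => W ω'' = W ω' ∧ Z ω'' = Z ω'))
            * (Ψ (W ω') 1 - Ψ (W ω') 0) * sgn Z ω'
            / (PZ p W Z ω' * δ (W ω')))
        (fun ω' => W ω' = W ω) = 0 :=
  stmt12_general p A Z W hZ hposWZ δ Ψ
end
end

section
/- Let A, Z ∈ {0,1}, W on a finite probability space with 0 < P(Z=1|W) < 1 a.s., δ(W) = E[A|W,Z=1] − E[A|W,Z=0]. Let δ*(W) ≠ 0 and m₀*(W) be arbitrary bounded functions, ε* = A − δ*(W)Z − m₀*(W), and Ψ̃(W) bounded. Then E[ ε* Ψ̃(W) (−1)^{1−Z} / ( P(Z|W) δ*(W) ) | W ] = Ψ̃(W) ( δ(W) − δ*(W) ) / δ*(W) = Ψ̃(W) δ(W)/δ*(W) − Ψ̃(W) almost surely. -/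
open Finset
open scoped Classical BigOperators

noncomputable section

variable {Ω : Type}

/-! Within the stratum `W = w` the inverse propensity `1 / P(Z | W)` is constant on each cell
`Z = z`, so the weighted residual sums, cell by cell, to `± ψ(w) P(W = w) / δ*(w)` times
`E[A | w, z] − δ*(w) z − m₀*(w)`. The two `m₀*` terms cancel and the difference of the cell means
is `δ(w)`. -/

section

variable [Fintype Ω]

theorem sum_ite_eq_add_of_zero_or_one (s : Ω → Prop) (Z g : Ω → ℝ)
    (hZ : ∀ ω, Z ω = 0 ∨ Z ω = 1) :
    (∑ ω, if s ω then g ω else 0) =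
      (∑ ω, if s ω ∧ Z ω = 1 then g ω else 0) + ∑ ω, if s ω ∧ Z ω = 0 then g ω else 0 := by
  rw [← Finset.sum_add_distrib]
  refine Finset.sum_congr rfl fun ω _ => ?_
  rcases hZ ω with h | h <;> simp [h]

theorem sum_ite_mul_eq_of_affine (p A g : Ω → ℝ) (s : Ω → Prop) [DecidablePred s] (k c : ℝ)
    (hs : Pr p s ≠ 0) (hg : ∀ ω, s ω → g ω = k * (A ω - c)) :
    (∑ ω, if s ω then p ω * g ω else 0) = k * Pr p s * (CE p A s - c) := by
  calc (∑ ω, if s ω then p ω * g ω else 0)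
      = k * (CE p A s * Pr p s - c * Pr p s) := by
        rw [CE, div_mul_cancel₀ _ hs, Pr, Finset.mul_sum, ← Finset.sum_sub_distrib,
          Finset.mul_sum]
        refine Finset.sum_congr rfl fun ω _ => ?_
        by_cases h : s ω
        · simp only [if_pos h, hg ω h]; ring
        · simp only [if_neg h]; ring
    _ = k * Pr p s * (CE p A s - c) := by ring

theorem PZ_eq_of_eq {β : Type} (p : Ω → ℝ) (W : Ω → β) (Z : Ω → ℝ) {ω : Ω} {w : β} {z : ℝ}
    (hw : W ω = w) (hz : Z ω = z) :
    PZ p W Z ω = Pr p (fun ω' => W ω' = w ∧ Z ω' = z) / Pr p (fun ω' => W ω' = w) := by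
  subst hw hz
  rfl

end

theorem stmt14_general {β : Type} [Fintype Ω]
    (p : Ω → ℝ)
    (A Z : Ω → ℝ) (W : Ω → β)
    (hZ : ∀ ω, Z ω = 0 ∨ Z ω = 1)
    (hposW : ∀ ω, 0 < p ω → 0 < Pr p (fun ω' => W ω' = W ω))
    (hposWZ : ∀ ω, 0 < p ω → ∀ z : ℝ, z = 0 ∨ z = 1 →
      0 < Pr p (fun ω' => W ω' = W ω ∧ Z ω' = z))
    (δ : β → ℝ)
    (hδdef : ∀ ω, 0 < p ω →
      δ (W ω) = CE p A (fun ω' => W ω' = W ω ∧ Z ω' = 1)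
        - CE p A (fun ω' => W ω' = W ω ∧ Z ω' = 0))
    (δs m0s ψ : β → ℝ) (hδsne : ∀ ω, 0 < p ω → δs (W ω) ≠ 0) :
    ∀ ω, 0 < p ω →
      CE p (fun ω' => (A ω' - δs (W ω') * Z ω' - m0s (W ω'))
          * ψ (W ω') * sgn Z ω' / (PZ p W Z ω' * δs (W ω')))
        (fun ω' => W ω' = W ω)
        = ψ (W ω) * (δ (W ω) - δs (W ω)) / δs (W ω) := by
  intro ω hω
  have hPW := (hposW ω hω).ne'
  have hS1 := (hposWZ ω hω 1 (Or.inr rfl)).ne'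
  have hS0 := (hposWZ ω hω 0 (Or.inl rfl)).ne'
  have hδs := hδsne ω hω
  have hδ := hδdef ω hω
  set w := W ω
  set PW := Pr p (fun ω' => W ω' = w) with hPWdef
  set S1 := Pr p (fun ω' => W ω' = w ∧ Z ω' = 1) with hS1def
  set S0 := Pr p (fun ω' => W ω' = w ∧ Z ω' = 0) with hS0def
  rw [CE, sum_ite_eq_add_of_zero_or_one _ Z _ hZ,
    sum_ite_mul_eq_of_affine p A _ _ (ψ w * PW / (S1 * δs w)) (δs w + m0s w) hS1,
    sum_ite_mul_eq_of_affine p A _ _ (-(ψ w * PW / (S0 * δs w))) (m0s w) hS0, ← hS1def,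
    ← hS0def, ← hPWdef, hδ]
  · field_simp
    ring
  · rintro ω' ⟨hw, hz⟩
    rw [PZ_eq_of_eq p W Z hw hz, ← hS0def, ← hPWdef, hw, sgn, hz, if_neg zero_ne_one]
    field_simp
    ring
  · rintro ω' ⟨hw, hz⟩
    rw [PZ_eq_of_eq p W Z hw hz, ← hS1def, ← hPWdef, hw, sgn, if_pos hz, hz]
    field_simp
    ring

/-- Triple-robustness computation (case ii): with the true instrument propensity and
possibly misspecified treatment regression (δ*, m₀*),
E[ε* Ψ̃(W)(−1)^{1−Z}/(P(Z|W)δ*(W)) | W] = Ψ̃(W)(δ(W) − δ*(W))/δ*(W). -/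
theorem stmt14 {β : Type} [Fintype Ω]
    (p : Ω → ℝ) (hp0 : ∀ ω, 0 ≤ p ω) (hp1 : ∑ ω, p ω = 1)
    (A Z : Ω → ℝ) (W : Ω → β)
    (hA : ∀ ω, A ω = 0 ∨ A ω = 1) (hZ : ∀ ω, Z ω = 0 ∨ Z ω = 1)
    (hposW : ∀ ω, 0 < p ω → 0 < Pr p (fun ω' => W ω' = W ω))
    (hposWZ : ∀ ω, 0 < p ω → ∀ z : ℝ, z = 0 ∨ z = 1 →
      0 < Pr p (fun ω' => W ω' = W ω ∧ Z ω' = z))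
    (δ : β → ℝ)
    (hδdef : ∀ ω, 0 < p ω →
      δ (W ω) = CE p A (fun ω' => W ω' = W ω ∧ Z ω' = 1)
        - CE p A (fun ω' => W ω' = W ω ∧ Z ω' = 0))
    (δs m0s ψ : β → ℝ) (hδsne : ∀ ω, 0 < p ω → δs (W ω) ≠ 0) :
    ∀ ω, 0 < p ω →
      CE p (fun ω' => (A ω' - δs (W ω') * Z ω' - m0s (W ω'))
          * ψ (W ω') * sgn Z ω' / (PZ p W Z ω' * δs (W ω')))
        (fun ω' => W ω' = W ω)
        = ψ (W ω) * (δ (W ω) - δs (W ω)) / δs (W ω) :=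
  stmt14_general p A Z W hZ hposW hposWZ δ hδdef δs m0s ψ hδsne
end
end
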